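/- arXiv:1512.03113 — 2 statements merged into one kernel-verified Lean document; each statement's English description precedes it below -/
import Mathlib

section
/- Let N ≥ 1 and R > 0, and let v : [0,R] → ℝ be continuous and non-decreasing with v(0) = 0, differentiable almost everywhere on (0,R), such that the function s ↦ v'(s)/s^{N-1} is non-increasing on (0,R) and v is locally absolutely continuous on (0,R]. If v(r) = (r/R)^N · v(R) for some r ∈ (0,R), then v(s) = (s/R)^N · v(R) for every s ∈ [0,R]. -/
open MeasureTheory Set Filter Topology

/-!
With `φ s = v' s / s ^ (N - 1)`, the fundamental theorem of calculus gives
`v b - v a = ∫ s in a..b, φ s * s ^ (N - 1)`, so the antitonicity of `φ` traps the slope of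
`g t = v (t ^ (1 / N))` on `[a ^ N, b ^ N]` between `φ b / N` and `φ a / N`. Hence the chord slopes
of `g` decrease and `g` is concave on `[0, R ^ N]`. The hypothesis says that `g` meets its chord
from `(0, 0)` to `(R ^ N, v R)` at the interior point `r ^ N`, and a concave function that meets
a chord at an interior point coincides with it.
-/

theorem ConcaveOn.eqOn_zero_of_mem_Ioo {g : ℝ → ℝ} {a b c : ℝ} (hg : ConcaveOn ℝ (Icc a b) g)
    (ha : g a = 0) (hb : g b = 0) (hc : c ∈ Ioo a b) (hgc : g c = 0) : EqOn g 0 (Icc a b) := by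
  intro x hx
  have hab : a ≤ b := hc.1.le.trans hc.2.le
  have hnonneg : 0 ≤ g x := by
    simpa [ha, hb] using hg.ge_on_segment (left_mem_Icc.2 hab) (right_mem_Icc.2 hab)
      (by rwa [segment_eq_Icc hab])
  refine le_antisymm ?_ hnonneg
  rcases lt_trichotomy x c with hxc | rfl | hcx
  · have hslope := hg.slope_anti_adjacent hx (right_mem_Icc.2 hab) hxc hc.2
    rw [hb, hgc, sub_self, zero_div, le_div_iff₀ (sub_pos.2 hxc), zero_mul] at hslope
    simpa using hslope
  · exact hgc.le
  · have hslope := hg.slope_anti_adjacent (left_mem_Icc.2 hab) hx hc.1 hcx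
    rw [hgc, ha, sub_zero, sub_self, zero_div, div_le_iff₀ (sub_pos.2 hcx), zero_mul] at hslope
    simpa using hslope

theorem integral_rpow_sub_one {N : ℝ} (hN : 0 < N) (a b : ℝ) :
    ∫ s in a..b, s ^ (N - 1) = (b ^ N - a ^ N) / N := by
  rw [integral_rpow (Or.inl (by linarith)), sub_add_cancel]

section VolumeGrowth

variable {N R : ℝ} {v v' : ℝ → ℝ}

theorem ae_nonneg_of_monotoneOn_of_hasDerivAt {a b : ℝ} (hmono : MonotoneOn v (Icc a b))
    (hderiv : ∀ᵐ s ∂(volume.restrict (Ioo a b)), HasDerivAt v (v' s) s) :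
    ∀ᵐ s ∂(volume.restrict (Ioo a b)), 0 ≤ v' s := by
  filter_upwards [hderiv, ae_restrict_mem measurableSet_Ioo] with s hd hs
  exact hd.hasDerivWithinAt.nonneg_of_monotoneOn (isOpen_Ioo.preperfect s hs)
    (hmono.mono Ioo_subset_Icc_self)

theorem AntitoneOn.le_div_rpow_mul_rpow {f : ℝ → ℝ} {S : Set ℝ} {p a s : ℝ}
    (hf : AntitoneOn (fun s => f s / s ^ p) S) (ha : a ∈ S) (hs : s ∈ S) (hs0 : 0 < s)
    (has : a ≤ s) : f s ≤ f a / a ^ p * s ^ p :=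
  calc f s = f s / s ^ p * s ^ p := (div_mul_cancel₀ _ (Real.rpow_pos_of_pos hs0 _).ne').symm
    _ ≤ f a / a ^ p * s ^ p := mul_le_mul_of_nonneg_right (hf ha hs has) (by positivity)

theorem AntitoneOn.div_rpow_mul_rpow_le {f : ℝ → ℝ} {S : Set ℝ} {p b s : ℝ}
    (hf : AntitoneOn (fun s => f s / s ^ p) S) (hb : b ∈ S) (hs : s ∈ S) (hs0 : 0 < s)
    (hsb : s ≤ b) : f b / b ^ p * s ^ p ≤ f s :=
  calc f b / b ^ p * s ^ p ≤ f s / s ^ p * s ^ p :=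
        mul_le_mul_of_nonneg_right (hf hs hb hsb) (by positivity)
    _ = f s := div_mul_cancel₀ _ (Real.rpow_pos_of_pos hs0 _).ne'

theorem intervalIntegrable_const_mul_rpow {a b : ℝ} (ha : 0 < a) (hab : a ≤ b) (p K : ℝ) :
    IntervalIntegrable (fun s => K * s ^ p) volume a b :=
  (intervalIntegral.intervalIntegrable_rpow
    (Or.inr (by rw [uIcc_of_le hab]; exact notMem_Icc_of_lt ha))).const_mul K

theorem intervalIntegrable_of_antitoneOn_div_rpow (hmono : MonotoneOn v (Icc 0 R))
    (hderiv : ∀ᵐ s ∂(volume.restrict (Ioo 0 R)), HasDerivAt v (v' s) s)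
    (hanti : AntitoneOn (fun s => v' s / s ^ (N - 1)) (Ioo 0 R))
    {a b : ℝ} (ha : a ∈ Ioo 0 R) (hab : a ≤ b) (hb : b ≤ R) :
    IntervalIntegrable v' volume a b := by
  have hsub : Ioo a b ⊆ Ioo 0 R := Ioo_subset_Ioo ha.1.le hb
  have hmeas : AEStronglyMeasurable v' (volume.restrict (Ioo 0 R)) :=
    (measurable_deriv v).aestronglyMeasurable.congr (hderiv.mono fun s hd => hd.deriv)
  have hbound := intervalIntegrable_const_mul_rpow ha.1 hab (N - 1) (v' a / a ^ (N - 1))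
  rw [intervalIntegrable_iff_integrableOn_Ioo_of_le hab] at hbound ⊢
  refine hbound.mono' (hmeas.mono_measure (Measure.restrict_mono hsub le_rfl)) ?_
  filter_upwards [ae_restrict_of_ae_restrict_of_subset hsub
    (ae_nonneg_of_monotoneOn_of_hasDerivAt hmono hderiv), ae_restrict_mem measurableSet_Ioo]
    with s hs0 hs
  rw [Real.norm_of_nonneg hs0]
  exact hanti.le_div_rpow_mul_rpow ha (hsub hs) (ha.1.trans hs.1) hs.1.le

theorem sub_le_of_antitoneOn_div_rpow (hN : 0 < N) (hmono : MonotoneOn v (Icc 0 R))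
    (hderiv : ∀ᵐ s ∂(volume.restrict (Ioo 0 R)), HasDerivAt v (v' s) s)
    (hanti : AntitoneOn (fun s => v' s / s ^ (N - 1)) (Ioo 0 R))
    (hFTC : ∀ a b : ℝ, 0 < a → a ≤ b → b ≤ R → v b - v a = ∫ s in a..b, v' s)
    {a b : ℝ} (ha : a ∈ Ioo 0 R) (hab : a ≤ b) (hb : b ≤ R) :
    v b - v a ≤ v' a / a ^ (N - 1) / N * (b ^ N - a ^ N) :=
  calc v b - v a = ∫ s in a..b, v' s := hFTC a b ha.1 hab hb
    _ ≤ ∫ s in a..b, v' a / a ^ (N - 1) * s ^ (N - 1) :=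
      intervalIntegral.integral_mono_on_of_le_Ioo hab
        (intervalIntegrable_of_antitoneOn_div_rpow hmono hderiv hanti ha hab hb)
        (intervalIntegrable_const_mul_rpow ha.1 hab _ _) fun s hs =>
          hanti.le_div_rpow_mul_rpow ha (Ioo_subset_Ioo ha.1.le hb hs) (ha.1.trans hs.1) hs.1.le
    _ = v' a / a ^ (N - 1) / N * (b ^ N - a ^ N) := by
      rw [intervalIntegral.integral_const_mul, integral_rpow_sub_one hN]
      ring

theorem le_sub_of_antitoneOn_div_rpow_of_pos (hN : 0 < N) (hmono : MonotoneOn v (Icc 0 R))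
    (hderiv : ∀ᵐ s ∂(volume.restrict (Ioo 0 R)), HasDerivAt v (v' s) s)
    (hanti : AntitoneOn (fun s => v' s / s ^ (N - 1)) (Ioo 0 R))
    (hFTC : ∀ a b : ℝ, 0 < a → a ≤ b → b ≤ R → v b - v a = ∫ s in a..b, v' s)
    {a b : ℝ} (ha : 0 < a) (hab : a ≤ b) (hb : b ∈ Ioo 0 R) :
    v' b / b ^ (N - 1) / N * (b ^ N - a ^ N) ≤ v b - v a :=
  calc v' b / b ^ (N - 1) / N * (b ^ N - a ^ N)
    _ = ∫ s in a..b, v' b / b ^ (N - 1) * s ^ (N - 1) := by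
      rw [intervalIntegral.integral_const_mul, integral_rpow_sub_one hN]
      ring
    _ ≤ ∫ s in a..b, v' s :=
      intervalIntegral.integral_mono_on_of_le_Ioo hab
        (intervalIntegrable_const_mul_rpow ha hab _ _)
        (intervalIntegrable_of_antitoneOn_div_rpow hmono hderiv hanti ⟨ha, hab.trans_lt hb.2⟩ hab
          hb.2.le) fun s hs =>
          hanti.div_rpow_mul_rpow_le hb (Ioo_subset_Ioo ha.le hb.2.le hs) (ha.trans hs.1) hs.2.le
    _ = v b - v a := (hFTC a b ha hab hb.2.le).symm

theorem le_sub_of_antitoneOn_div_rpow (hN : 0 < N) (hmono : MonotoneOn v (Icc 0 R))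
    (hderiv : ∀ᵐ s ∂(volume.restrict (Ioo 0 R)), HasDerivAt v (v' s) s)
    (hanti : AntitoneOn (fun s => v' s / s ^ (N - 1)) (Ioo 0 R))
    (hFTC : ∀ a b : ℝ, 0 < a → a ≤ b → b ≤ R → v b - v a = ∫ s in a..b, v' s)
    {a b : ℝ} (ha : 0 ≤ a) (hab : a ≤ b) (hb : b ∈ Ioo 0 R) :
    v' b / b ^ (N - 1) / N * (b ^ N - a ^ N) ≤ v b - v a := by
  rcases ha.eq_or_lt with rfl | ha
  -- `hFTC` only reaches down to positive `a`, so the endpoint `0` is reached as a limit.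
  · have hlim : Tendsto (fun ε : ℝ => v' b / b ^ (N - 1) / N * (b ^ N - ε ^ N)) (𝓝[>] 0)
        (𝓝 (v' b / b ^ (N - 1) / N * (b ^ N - 0 ^ N))) :=
      (((Real.continuousAt_rpow_const 0 N (Or.inr hN.le)).tendsto.mono_left
        nhdsWithin_le_nhds).const_sub _).const_mul _
    refine le_of_tendsto hlim ?_
    filter_upwards [Ioo_mem_nhdsGT hb.1] with ε hε
    calc v' b / b ^ (N - 1) / N * (b ^ N - ε ^ N) ≤ v b - v ε :=
          le_sub_of_antitoneOn_div_rpow_of_pos hN hmono hderiv hanti hFTC hε.1 hε.2.le hb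
      _ ≤ v b - v 0 := sub_le_sub_left
          (hmono ⟨le_rfl, hb.1.le.trans hb.2.le⟩ ⟨hε.1.le, hε.2.le.trans hb.2.le⟩ hε.1.le) _
  · exact le_sub_of_antitoneOn_div_rpow_of_pos hN hmono hderiv hanti hFTC ha hab hb

theorem concaveOn_comp_rpow_inv (hN : 0 < N) (hR : 0 ≤ R) (hmono : MonotoneOn v (Icc 0 R))
    (hderiv : ∀ᵐ s ∂(volume.restrict (Ioo 0 R)), HasDerivAt v (v' s) s)
    (hanti : AntitoneOn (fun s => v' s / s ^ (N - 1)) (Ioo 0 R))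
    (hFTC : ∀ a b : ℝ, 0 < a → a ≤ b → b ≤ R → v b - v a = ∫ s in a..b, v' s) :
    ConcaveOn ℝ (Icc 0 (R ^ N)) (fun t => v (t ^ N⁻¹)) := by
  have hslope : ∀ {a b c : ℝ}, 0 ≤ a → a < b → b < c → c ≤ R →
      (v c - v b) / (c ^ N - b ^ N) ≤ (v b - v a) / (b ^ N - a ^ N) := by
    intro a b c ha hab hbc hc
    have hb : b ∈ Ioo 0 R := ⟨ha.trans_lt hab, hbc.trans_le hc⟩
    calc (v c - v b) / (c ^ N - b ^ N) ≤ v' b / b ^ (N - 1) / N := by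
          rw [div_le_iff₀ (sub_pos.2 (Real.rpow_lt_rpow hb.1.le hbc hN))]
          exact sub_le_of_antitoneOn_div_rpow hN hmono hderiv hanti hFTC hb hbc.le hc
      _ ≤ (v b - v a) / (b ^ N - a ^ N) := by
          rw [le_div_iff₀ (sub_pos.2 (Real.rpow_lt_rpow ha hab hN))]
          exact le_sub_of_antitoneOn_div_rpow hN hmono hderiv hanti hFTC ha hab.le hb
  refine concaveOn_of_slope_anti_adjacent (convex_Icc _ _) fun {x y z} hx hz hxy hyz => ?_
  have hy : 0 ≤ y := hx.1.trans hxy.le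
  have hN' : 0 < N⁻¹ := inv_pos.2 hN
  have hzR : z ^ N⁻¹ ≤ R :=
    (Real.rpow_le_rpow hz.1 hz.2 hN'.le).trans_eq (Real.rpow_rpow_inv hR hN.ne')
  simpa only [Real.rpow_inv_rpow hx.1 hN.ne', Real.rpow_inv_rpow hy hN.ne',
    Real.rpow_inv_rpow hz.1 hN.ne'] using hslope (Real.rpow_nonneg hx.1 _)
      (Real.rpow_lt_rpow hx.1 hxy hN') (Real.rpow_lt_rpow hy hyz hN') hzR

end VolumeGrowth

theorem stmt_1_general (N R : ℝ) (hN : 1 ≤ N) (hR : 0 < R) (v v' : ℝ → ℝ)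
    (hmono : MonotoneOn v (Set.Icc 0 R))
    (hv0 : v 0 = 0)
    (hderiv : ∀ᵐ s ∂(volume.restrict (Set.Ioo 0 R)), HasDerivAt v (v' s) s)
    (hanti : AntitoneOn (fun s => v' s / s ^ (N - 1)) (Set.Ioo 0 R))
    (hFTC : ∀ a b : ℝ, 0 < a → a ≤ b → b ≤ R → v b - v a = ∫ s in a..b, v' s)
    (r : ℝ) (hr : r ∈ Set.Ioo 0 R)
    (heq : v r = (r / R) ^ N * v R) :
    ∀ s ∈ Set.Icc (0:ℝ) R, v s = (s / R) ^ N * v R := by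
  have hN0 : 0 < N := by linarith
  have hscale : ∀ s, 0 ≤ s → (s / R) ^ N * v R = v R / R ^ N * s ^ N := fun s hs => by
    rw [Real.div_rpow hs hR.le]; ring
  have hchord : ConcaveOn ℝ (Icc 0 (R ^ N)) (fun t => v (t ^ N⁻¹) - v R / R ^ N * t) :=
    (concaveOn_comp_rpow_inv hN0 hR.le hmono hderiv hanti hFTC).sub
      ((LinearMap.mulLeft ℝ (v R / R ^ N)).convexOn (convex_Icc _ _))
  have hzero := hchord.eqOn_zero_of_mem_Ioo
    (by simp [Real.zero_rpow (inv_ne_zero hN0.ne'), hv0])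
    (by simp [Real.rpow_rpow_inv hR.le hN0.ne', (Real.rpow_pos_of_pos hR N).ne'])
    ⟨Real.rpow_pos_of_pos hr.1 N, Real.rpow_lt_rpow hr.1.le hr.2 hN0⟩
    (by simp [Real.rpow_rpow_inv hr.1.le hN0.ne', heq, hscale r hr.1.le])
  intro s hs
  have hs' := hzero ⟨Real.rpow_nonneg hs.1 N, Real.rpow_le_rpow hs.1 hs.2 hN0.le⟩
  simp only [Real.rpow_rpow_inv hs.1 hN0.ne', Pi.zero_apply, sub_eq_zero] at hs'
  rw [hs', hscale s hs.1]

theorem stmt_1 (N R : ℝ) (hN : 1 ≤ N) (hR : 0 < R) (v v' : ℝ → ℝ)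
    (hcont : ContinuousOn v (Set.Icc 0 R))
    (hmono : MonotoneOn v (Set.Icc 0 R))
    (hv0 : v 0 = 0)
    (hderiv : ∀ᵐ s ∂(volume.restrict (Set.Ioo 0 R)), HasDerivAt v (v' s) s)
    (hanti : AntitoneOn (fun s => v' s / s ^ (N - 1)) (Set.Ioo 0 R))
    (hFTC : ∀ a b : ℝ, 0 < a → a ≤ b → b ≤ R → v b - v a = ∫ s in a..b, v' s)
    (r : ℝ) (hr : r ∈ Set.Ioo 0 R)
    (heq : v r = (r / R) ^ N * v R) :
    ∀ s ∈ Set.Icc (0:ℝ) R, v s = (s / R) ^ N * v R :=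
  stmt_1_general N R hN hR v v' hmono hv0 hderiv hanti hFTC r hr heq
end

section
/- Let C > 0 and let D ⊆ [0,∞) be a Borel set whose complement is Lebesgue-negligible. Let J : [0,∞) → ℝ be a bounded measurable function such that |J(s+h) − J(s)| ≤ C·e^{−s}·(1 − e^{−h}) for every s ∈ D and every h ≥ 0 with s + h ∈ D. Then there exists a locally Lipschitz function J̄ : [0,∞) → ℝ with J̄ = J a.e., satisfying |J̄(s+h) − J̄(s)| ≤ C·e^{−s}·(1 − e^{−h}) for all s, h ≥ 0, and J̄ has a finite limit as s → +∞. -/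
open MeasureTheory Topology Filter

theorem stmt_8 (C : ℝ) (hC : 0 < C) (D : Set ℝ) (hD : MeasurableSet D)
    (hDsub : D ⊆ Set.Ici 0) (hnull : volume (Set.Ici (0:ℝ) \ D) = 0)
    (J : ℝ → ℝ) (hmeas : Measurable J) (hbdd : ∃ M, ∀ s, |J s| ≤ M)
    (hest : ∀ s ∈ D, ∀ h : ℝ, 0 ≤ h → s + h ∈ D →
      |J (s + h) - J s| ≤ C * Real.exp (-s) * (1 - Real.exp (-h))) :
    ∃ J' : ℝ → ℝ,
      LipschitzOnWith (Real.toNNReal C) J' (Set.Ici 0) ∧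
      (∀ s : ℝ, 0 ≤ s → ∀ h : ℝ, 0 ≤ h →
        |J' (s + h) - J' s| ≤ C * Real.exp (-s) * (1 - Real.exp (-h))) ∧
      (∀ᵐ s ∂(volume.restrict (Set.Ici (0:ℝ))), J' s = J s) ∧
      ∃ l : ℝ, Tendsto J' atTop (𝓝 l) := by
  -- J is Lipschitz on D
  have hcoe : ((Real.toNNReal C : NNReal) : ℝ) = C := Real.coe_toNNReal C hC.le
  have hlipD : LipschitzOnWith (Real.toNNReal C) J D := by
    rw [lipschitzOnWith_iff_dist_le_mul]
    have main : ∀ x ∈ D, ∀ y ∈ D, x ≤ y → dist (J y) (J x) ≤ C * dist y x := by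
      intro x hx y hy hxy
      have hx0 : (0:ℝ) ≤ x := hDsub hx
      have h0 : 0 ≤ y - x := by linarith
      have := hest x hx (y - x) h0 (by simpa using hy)
      rw [Real.dist_eq, Real.dist_eq]
      have hxe : Real.exp (-x) ≤ 1 := Real.exp_le_one_iff.2 (by linarith)
      have h1e : 1 - Real.exp (-(y - x)) ≤ y - x := by
        have := Real.add_one_le_exp (-(y - x)); linarith
      have h2e : Real.exp (-(y - x)) ≤ 1 := Real.exp_le_one_iff.2 (by linarith)
      have habs : |y - x| = y - x := abs_of_nonneg h0
      calc |J y - J x| = |J (x + (y - x)) - J x| := by ring_nf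
        _ ≤ C * Real.exp (-x) * (1 - Real.exp (-(y - x))) := this
        _ ≤ C * 1 * (y - x) := by
            apply mul_le_mul _ h1e (by linarith) (by positivity)
            nlinarith
        _ = C * |y - x| := by rw [habs]; ring
    intro x hx y hy
    rw [hcoe]
    rcases le_total x y with hxy | hxy
    · rw [dist_comm x y, dist_comm (J x) (J y)]; exact main x hx y hy hxy
    · exact main y hy x hx hxy
  obtain ⟨g, hg, hEq⟩ := hlipD.extend_real
  have hgc : Continuous g := hg.continuous
  -- density of D in Ici 0
  have hdense : Set.Ici (0:ℝ) ⊆ closure D := by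
    intro s hs
    rw [Metric.mem_closure_iff]
    intro ε hε
    by_contra hne
    push_neg at hne
    have hsub : Set.Ioo s (s + ε) ⊆ Set.Ici (0:ℝ) \ D := by
      intro x hx
      refine ⟨le_trans hs hx.1.le, fun hxD => ?_⟩
      have := hne x hxD
      rw [Real.dist_eq, abs_of_nonpos (by linarith [hx.1])] at this
      linarith [hx.2]
    have := measure_mono_null hsub hnull
    rw [Real.volume_Ioo] at this
    simp only [ENNReal.ofReal_eq_zero] at this
    linarith
  -- key estimate for g
  have key : ∀ s : ℝ, 0 ≤ s → ∀ h : ℝ, 0 ≤ h →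
      |g (s + h) - g s| ≤ C * Real.exp (-s) * (1 - Real.exp (-h)) := by
    intro s hs h hh
    rcases eq_or_lt_of_le hh with rfl | hh
    · simp
    · obtain ⟨u, hu, hut⟩ := mem_closure_iff_seq_limit.1 (hdense hs)
      obtain ⟨v, hv, hvt⟩ := mem_closure_iff_seq_limit.1 (hdense (by linarith : (0:ℝ) ≤ s + h))
      have hev : ∀ᶠ n in atTop, u n ≤ v n := by
        have hsub : Tendsto (fun n => v n - u n) atTop (𝓝 (s + h - s)) := hvt.sub hut
        exact (hsub.eventually (eventually_gt_nhds (by linarith : (0:ℝ) < s + h - s))).mono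
          (fun n hn => by linarith)
      have hin : ∀ᶠ n in atTop,
          |g (v n) - g (u n)| ≤ C * Real.exp (-(u n)) * (1 - Real.exp (-(v n - u n))) := by
        filter_upwards [hev] with n hn
        have := hest (u n) (hu n) (v n - u n) (by linarith) (by simpa using hv n)
        have e : u n + (v n - u n) = v n := by ring
        rw [e, hEq (hv n), hEq (hu n)] at this
        exact this
      have hL : Tendsto (fun n => |g (v n) - g (u n)|) atTop (𝓝 |g (s + h) - g s|) :=
        (((hgc.tendsto _).comp hvt).sub ((hgc.tendsto _).comp hut)).abs
      have hR : Tendsto (fun n => C * Real.exp (-(u n)) * (1 - Real.exp (-(v n - u n))))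
          atTop (𝓝 (C * Real.exp (-s) * (1 - Real.exp (-h)))) := by
        have e1 : Tendsto (fun n => Real.exp (-(u n))) atTop (𝓝 (Real.exp (-s))) :=
          (Real.continuous_exp.tendsto _).comp hut.neg
        have e2 : Tendsto (fun n => Real.exp (-(v n - u n))) atTop (𝓝 (Real.exp (-h))) := by
          have : Tendsto (fun n => v n - u n) atTop (𝓝 h) := by
            have := hvt.sub hut; simpa using this
          exact (Real.continuous_exp.tendsto _).comp this.neg
        exact (tendsto_const_nhds.mul e1).mul (tendsto_const_nhds.sub e2)
      exact le_of_tendsto_of_tendsto hL hR hin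
  refine ⟨g, hg.lipschitzOnWith, key, ?_, ?_⟩
  · rw [ae_restrict_iff' measurableSet_Ici]
    have h0 : volume {x : ℝ | ¬ (x ∈ Set.Ici (0:ℝ) → g x = J x)} = 0 := by
      apply measure_mono_null _ hnull
      intro x hx
      simp only [Set.mem_setOf_eq, Classical.not_imp] at hx
      exact ⟨hx.1, fun hxD => hx.2 (hEq hxD).symm⟩
    exact h0
  · -- limit at infinity
    have hbnd : ∀ n : ℕ, ∀ t : ℝ, (n:ℝ) ≤ t → |g t - g n| ≤ C * Real.exp (-(n:ℝ)) := by
      intro n t ht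
      have := key n (Nat.cast_nonneg n) (t - n) (by linarith)
      have h2 : 1 - Real.exp (-(t - n)) ≤ 1 := by
        have := Real.exp_pos (-(t - (n:ℝ))); linarith
      calc |g t - g n| = |g ((n:ℝ) + (t - n)) - g n| := by ring_nf
        _ ≤ C * Real.exp (-(n:ℝ)) * (1 - Real.exp (-(t - n))) := this
        _ ≤ C * Real.exp (-(n:ℝ)) * 1 := by
            apply mul_le_mul_of_nonneg_left h2 (by positivity)
        _ = C * Real.exp (-(n:ℝ)) := mul_one _
    have hto0 : Tendsto (fun n : ℕ => C * Real.exp (-(n:ℝ))) atTop (𝓝 0) := by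
      have : Tendsto (fun n : ℕ => Real.exp (-(n:ℝ))) atTop (𝓝 0) :=
        Real.tendsto_exp_neg_atTop_nhds_zero.comp tendsto_natCast_atTop_atTop
      simpa using tendsto_const_nhds.mul this
    have cauchy : CauchySeq (fun n : ℕ => g n) := by
      rw [Metric.cauchySeq_iff']
      intro ε hε
      obtain ⟨N, hN⟩ := (hto0.eventually (eventually_lt_nhds hε)).exists
      refine ⟨N, fun n hn => ?_⟩
      rw [Real.dist_eq]
      exact lt_of_le_of_lt (hbnd N n (by exact_mod_cast hn)) hN
    obtain ⟨l, hl⟩ := cauchySeq_tendsto_of_complete cauchy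
    refine ⟨l, ?_⟩
    rw [Metric.tendsto_atTop]
    intro ε hε
    have hl2 : Tendsto (fun n : ℕ => dist (g n) l) atTop (𝓝 0) :=
      tendsto_iff_dist_tendsto_zero.1 hl
    obtain ⟨n, hn1, hn2⟩ := ((hto0.eventually (eventually_lt_nhds (by linarith : (0:ℝ) < ε/2))).and
      (hl2.eventually (eventually_lt_nhds (by linarith : (0:ℝ) < ε/2)))).exists
    refine ⟨n, fun t ht => ?_⟩
    calc dist (g t) l ≤ dist (g t) (g n) + dist (g n) l := dist_triangle _ _ _
      _ < ε/2 + ε/2 := by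
          apply add_lt_add_of_le_of_lt _ hn2
          rw [Real.dist_eq]
          exact (hbnd n t ht).trans hn1.le
      _ = ε := by ring
end
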